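/- Let ρ be a density matrix and X̃ a real symmetric 2n×2n matrix with spectral decomposition X̃ = ∑_l λ_l v_l v_lᵀ. Let R_1,…,R_{2n} be Hermitian matrices (quadratures) and set V_{ij} = Tr[ρ{R_i,R_j}] (the symmetrized second moment matrix, assumed real symmetric). Then ‖∑_{i,j} X̃_{ij} R_i ρ R_j‖₁ ≤ (1/2)·Tr[V|X̃|]. -/

import Mathlib

open scoped ComplexOrder

/-- The square root of a positive semidefinite matrix (as in the older Mathlib). -/
noncomputable def Matrix.PosSemidef.sqrt {n 𝕜 : Type*} [Fintype n] [RCLike 𝕜] [DecidableEq n]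
    {A : Matrix n n 𝕜} (hA : A.PosSemidef) : Matrix n n 𝕜 :=
  (hA.1.eigenvectorUnitary : Matrix n n 𝕜) *
    Matrix.diagonal ((RCLike.ofReal : ℝ → 𝕜) ∘ Real.sqrt ∘ hA.1.eigenvalues) *
    (star hA.1.eigenvectorUnitary : Matrix n n 𝕜)

/-- The trace norm `‖M‖₁ = Tr √(M†M)` of a complex square matrix. -/
noncomputable def traceNorm {m : ℕ} (M : Matrix (Fin m) (Fin m) ℂ) : ℝ :=
  ((Matrix.posSemidef_conjTranspose_mul_self M).sqrt.trace).re

lemma Matrix.PosSemidef.sqrt_eq_cfc {n 𝕜 : Type*} [Fintype n] [RCLike 𝕜] [DecidableEq n]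
    {A : Matrix n n 𝕜} (hA : A.PosSemidef) : hA.sqrt = cfc Real.sqrt A := by
  rw [hA.1.cfc_eq]; rfl

lemma Matrix.PosSemidef.spectrum_nonneg' {n 𝕜 : Type*} [Fintype n] [RCLike 𝕜] [DecidableEq n]
    {A : Matrix n n 𝕜} (hA : A.PosSemidef) : ∀ x ∈ spectrum ℝ A, 0 ≤ x := by
  intro x hx
  obtain ⟨i, rfl⟩ := hA.1.spectrum_real_eq_range_eigenvalues ▸ hx
  exact hA.eigenvalues_nonneg i

lemma Matrix.PosSemidef.sqrt_mul_self {n 𝕜 : Type*} [Fintype n] [RCLike 𝕜] [DecidableEq n]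
    {A : Matrix n n 𝕜} (hA : A.PosSemidef) : hA.sqrt * hA.sqrt = A := by
  have hsa : IsSelfAdjoint A := hA.1
  rw [hA.sqrt_eq_cfc, ← cfc_mul Real.sqrt Real.sqrt A]
  conv_rhs => rw [← cfc_id' ℝ A]
  exact cfc_congr fun x hx => Real.mul_self_sqrt (hA.spectrum_nonneg' x hx)

lemma Matrix.PosSemidef.posSemidef_sqrt {n 𝕜 : Type*} [Fintype n] [RCLike 𝕜] [DecidableEq n]
    {A : Matrix n n 𝕜} (hA : A.PosSemidef) : hA.sqrt.PosSemidef := by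
  unfold Matrix.PosSemidef.sqrt
  rw [Matrix.star_eq_conjTranspose]
  refine Matrix.PosSemidef.mul_mul_conjTranspose_same (Matrix.PosSemidef.diagonal ?_) _
  intro i
  exact RCLike.ofReal_nonneg.mpr (Real.sqrt_nonneg _)

lemma Matrix.PosSemidef.eq_sqrt_of_sq_eq {n 𝕜 : Type*} [Fintype n] [RCLike 𝕜] [DecidableEq n]
    {B : Matrix n n 𝕜} (hB : B.PosSemidef) {A : Matrix n n 𝕜} (hA : A.PosSemidef)
    (h : B ^ 2 = A) : B = hA.sqrt := by
  subst h
  have hsa : IsSelfAdjoint B := hB.1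
  rw [hA.sqrt_eq_cfc, ← cfc_comp_pow Real.sqrt 2 B]
  conv_lhs => rw [← cfc_id' ℝ B]
  exact cfc_congr fun x hx => (Real.sqrt_sq (hB.spectrum_nonneg' x hx)).symm

section helperLemmas
open Matrix

section helpers

variable {d : ℕ}

lemma psd_trace_re_nonneg {A : Matrix (Fin d) (Fin d) ℂ} (hA : A.PosSemidef) :
    0 ≤ A.trace.re := by
  have h : (0:ℂ) ≤ A.trace := by
    refine Finset.sum_nonneg fun i _ => ?_
    exact hA.diag_nonneg
  exact (Complex.le_def.mp h).1

lemma psd_mul_trace_re_nonneg {A B : Matrix (Fin d) (Fin d) ℂ}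
    (hA : A.PosSemidef) (hB : B.PosSemidef) : 0 ≤ (A * B).trace.re := by
  have h1 : (A * B).trace = (hA.sqrt * B * hA.sqrt).trace := by
    conv_lhs => rw [← hA.sqrt_mul_self, mul_assoc, Matrix.trace_mul_comm]
  have h2 : (hA.sqrt * B * hA.sqrt).PosSemidef := by
    have := hB.conjTranspose_mul_mul_same hA.sqrt
    rwa [hA.posSemidef_sqrt.1.eq] at this
  rw [h1]
  exact psd_trace_re_nonneg h2

end helpers

section conj

variable {d : ℕ} {𝕜 : Type*} [RCLike 𝕜] {U : Matrix (Fin d) (Fin d) 𝕜}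

lemma conj_unit_diag_mul (hU : Uᴴ * U = 1) (f g : Fin d → 𝕜) :
    (U * diagonal f * Uᴴ) * (U * diagonal g * Uᴴ) = U * diagonal (fun i => f i * g i) * Uᴴ := by
  calc (U * diagonal f * Uᴴ) * (U * diagonal g * Uᴴ)
      = U * (diagonal f * ((Uᴴ * U) * (diagonal g * Uᴴ))) := by
        simp only [mul_assoc]
    _ = U * diagonal (fun i => f i * g i) * Uᴴ := by
        rw [hU, one_mul, ← diagonal_mul_diagonal, mul_assoc, mul_assoc]

lemma trace_conj_unit_diag (hU : Uᴴ * U = 1) (f : Fin d → 𝕜) :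
    (U * diagonal f * Uᴴ).trace = ∑ i, f i := by
  rw [Matrix.trace_mul_cycle, hU, one_mul, trace_diagonal]

end conj

lemma traceNorm_sub_psd_le {d : ℕ} {P N : Matrix (Fin d) (Fin d) ℂ}
    (hP : P.PosSemidef) (hN : N.PosSemidef) :
    traceNorm (P - N) ≤ P.trace.re + N.trace.re := by
  have hM : (P - N).IsHermitian := hP.1.sub hN.1
  set U : Matrix (Fin d) (Fin d) ℂ := (hM.eigenvectorUnitary : Matrix (Fin d) (Fin d) ℂ)
    with hUdef
  have hU : Uᴴ * U = 1 := by
    simpa [hUdef, Matrix.star_eq_conjTranspose] using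
      (Matrix.mem_unitaryGroup_iff'.mp hM.eigenvectorUnitary.2)
  set e : Fin d → ℝ := hM.eigenvalues with he
  have hspec : P - N = U * diagonal (fun i => ((e i : ℝ) : ℂ)) * Uᴴ := by
    simpa [Matrix.star_eq_conjTranspose, Function.comp_def] using hM.spectral_theorem
  have hU' : U * Uᴴ = 1 := by
    simpa [hUdef, Matrix.star_eq_conjTranspose] using
      (Matrix.mem_unitaryGroup_iff.mp hM.eigenvectorUnitary.2)
  have hpos : ∀ (f : Fin d → ℝ), (∀ i, 0 ≤ f i) →
      (U * diagonal (fun i => ((f i : ℝ) : ℂ)) * Uᴴ).PosSemidef := by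
    intro f hf
    refine Matrix.PosSemidef.mul_mul_conjTranspose_same (Matrix.PosSemidef.diagonal ?_) U
    intro i
    exact Complex.zero_le_real.mpr (hf i)
  set sgn : Fin d → ℝ := fun i => if 0 ≤ e i then 1 else -1 with hsgn
  set W : Matrix (Fin d) (Fin d) ℂ := U * diagonal (fun i => ((sgn i : ℝ) : ℂ)) * Uᴴ with hW
  set absM : Matrix (Fin d) (Fin d) ℂ := U * diagonal (fun i => ((|e i| : ℝ) : ℂ)) * Uᴴ
    with habsdef
  have habs : absM.PosSemidef := hpos _ (fun i => abs_nonneg _)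
  have hsq : absM ^ 2 = (P - N)ᴴ * (P - N) := by
    rw [hM.eq, habsdef, pow_two, conj_unit_diag_mul hU, hspec, conj_unit_diag_mul hU]
    have hc : (fun i => ((|e i| : ℝ):ℂ) * ((|e i| : ℝ):ℂ)) = fun i => ((e i:ℝ):ℂ) * ((e i:ℝ):ℂ) := by
      funext i
      rw [← Complex.ofReal_mul, ← Complex.ofReal_mul, abs_mul_abs_self]
    rw [hc]
  have hsqrt : absM = (Matrix.posSemidef_conjTranspose_mul_self (P - N)).sqrt :=
    habs.eq_sqrt_of_sq_eq _ hsq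
  have hTN : traceNorm (P - N) = ∑ i, |e i| := by
    rw [traceNorm, ← hsqrt, habsdef, trace_conj_unit_diag hU, ← Complex.ofReal_sum,
      Complex.ofReal_re]
  have hMW : (((P - N) * W).trace).re = ∑ i, |e i| := by
    rw [hspec, hW, conj_unit_diag_mul hU, trace_conj_unit_diag hU]
    have hc : ∀ i, ((e i : ℂ) * ((sgn i : ℝ) : ℂ)) = ((|e i| : ℝ) : ℂ) := by
      intro i
      rw [← Complex.ofReal_mul]
      norm_cast
      rw [hsgn]
      dsimp only
      split_ifs with h
      · rw [mul_one, abs_of_nonneg h]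
      · rw [mul_neg_one, abs_of_neg (lt_of_not_ge h)]
    simp only [hc]
    rw [← Complex.ofReal_sum, Complex.ofReal_re]
  have hone : (1 : Matrix (Fin d) (Fin d) ℂ) = U * diagonal (fun _ => ((1:ℝ):ℂ)) * Uᴴ := by
    have : diagonal (fun _ : Fin d => ((1:ℝ):ℂ)) = 1 := by
      simp [Matrix.diagonal_one]
    rw [this, mul_one, hU']
  have hsub : ∀ (f g : Fin d → ℝ),
      (U * diagonal (fun i => ((f i : ℝ):ℂ)) * Uᴴ) - (U * diagonal (fun i => ((g i : ℝ):ℂ)) * Uᴴ)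
        = U * diagonal (fun i => ((f i - g i : ℝ):ℂ)) * Uᴴ := by
    intro f g
    have hc : (fun i => ((f i - g i : ℝ):ℂ)) = fun i => ((f i:ℝ):ℂ) - ((g i:ℝ):ℂ) := by
      funext i; push_cast; ring
    rw [hc, ← Matrix.diagonal_sub, mul_sub, sub_mul]
  have hadd : ∀ (f g : Fin d → ℝ),
      (U * diagonal (fun i => ((f i : ℝ):ℂ)) * Uᴴ) + (U * diagonal (fun i => ((g i : ℝ):ℂ)) * Uᴴ)
        = U * diagonal (fun i => ((f i + g i : ℝ):ℂ)) * Uᴴ := by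
    intro f g
    have hc : (fun i => ((f i + g i : ℝ):ℂ)) = fun i => ((f i:ℝ):ℂ) + ((g i:ℝ):ℂ) := by
      funext i; push_cast; ring
    rw [hc, ← Matrix.diagonal_add, mul_add, add_mul]
  have h1W : ((1 : Matrix (Fin d) (Fin d) ℂ) - W).PosSemidef := by
    rw [hone, hW, hsub]
    refine hpos _ fun i => ?_
    rw [hsgn]
    dsimp only
    split_ifs <;> norm_num
  have h1W' : ((1 : Matrix (Fin d) (Fin d) ℂ) + W).PosSemidef := by
    rw [hone, hW, hadd]
    refine hpos _ fun i => ?_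
    rw [hsgn]
    dsimp only
    split_ifs <;> norm_num
  have hPW : ((P * W).trace).re ≤ P.trace.re := by
    have h0 := psd_mul_trace_re_nonneg hP h1W
    rw [mul_sub, mul_one, Matrix.trace_sub, Complex.sub_re] at h0
    linarith
  have hNW : -(N.trace.re) ≤ ((N * W).trace).re := by
    have h0 := psd_mul_trace_re_nonneg hN h1W'
    rw [mul_add, mul_one, Matrix.trace_add, Complex.add_re] at h0
    linarith
  have hdec : (((P - N) * W).trace).re = ((P * W).trace).re - ((N * W).trace).re := by
    rw [sub_mul, Matrix.trace_sub, Complex.sub_re]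
  rw [hTN, ← hMW, hdec]
  linarith

lemma sum_rotate {α : Type*} [AddCommMonoid α] {I J L : Type*} [Fintype I] [Fintype J]
    [Fintype L] (f : I → J → L → α) :
    ∑ i, ∑ j, ∑ l, f i j l = ∑ l, ∑ i, ∑ j, f i j l := by
  calc ∑ i, ∑ j, ∑ l, f i j l
      = ∑ j, ∑ i, ∑ l, f i j l := Finset.sum_comm
    _ = ∑ j, ∑ l, ∑ i, f i j l := Finset.sum_congr rfl fun _ _ => Finset.sum_comm
    _ = ∑ l, ∑ j, ∑ i, f i j l := Finset.sum_comm
    _ = ∑ l, ∑ i, ∑ j, f i j l := Finset.sum_congr rfl fun _ _ => Finset.sum_comm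

end helperLemmas

open Matrix in
theorem traceNorm_sum_quadrature_le {m n : ℕ}
    (ρ : Matrix (Fin m) (Fin m) ℂ) (hρ : ρ.PosSemidef) (htr : ρ.trace = 1)
    (R : Fin (2 * n) → Matrix (Fin m) (Fin m) ℂ) (hR : ∀ i, (R i).IsHermitian)
    (X V : Matrix (Fin (2 * n)) (Fin (2 * n)) ℝ) (hX : X.IsSymm) (hVs : V.IsSymm)
    (hV : ∀ i j, (ρ * (R i * R j + R j * R i)).trace = (V i j : ℂ)) :
    traceNorm (∑ i, ∑ j, (X i j : ℂ) • (R i * ρ * R j)) ≤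
      (1/2) * (V * (Matrix.posSemidef_conjTranspose_mul_self X).sqrt).trace := by
  classical
  have hXh : X.IsHermitian := by
    rw [Matrix.IsHermitian, Matrix.conjTranspose_eq_transpose_of_trivial]
    exact hX
  set Ur : Matrix (Fin (2*n)) (Fin (2*n)) ℝ :=
    (hXh.eigenvectorUnitary : Matrix (Fin (2*n)) (Fin (2*n)) ℝ) with hUrdef
  have hU : Urᴴ * Ur = 1 := by
    simpa [hUrdef, Matrix.star_eq_conjTranspose] using
      (Matrix.mem_unitaryGroup_iff'.mp hXh.eigenvectorUnitary.2)
  set e : Fin (2*n) → ℝ := hXh.eigenvalues with he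
  have hspec : X = Ur * diagonal e * Urᴴ := by
    simpa [Matrix.star_eq_conjTranspose, RCLike.ofReal_real_eq_id, Function.id_comp]
      using hXh.spectral_theorem
  -- square root of XᴴX
  have habsX : (Ur * diagonal (fun i => |e i|) * Urᴴ).PosSemidef := by
    refine Matrix.PosSemidef.mul_mul_conjTranspose_same (Matrix.PosSemidef.diagonal ?_) Ur
    intro i
    exact abs_nonneg _
  have hXsq : (Ur * diagonal (fun i => |e i|) * Urᴴ) ^ 2 = Xᴴ * X := by
    rw [pow_two, conj_unit_diag_mul hU, hXh.eq]
    conv_rhs => rw [hspec]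
    rw [conj_unit_diag_mul hU]
    have hcc : (fun i => |e i| * |e i|) = fun i => e i * e i := by
      funext i
      rw [abs_mul_abs_self]
    rw [hcc]
  have hsqrtX : Ur * diagonal (fun i => |e i|) * Urᴴ
      = (Matrix.posSemidef_conjTranspose_mul_self X).sqrt :=
    habsX.eq_sqrt_of_sq_eq _ hXsq
  set w : Fin (2*n) → ℝ := fun l => ∑ i, ∑ j, Ur i l * V i j * Ur j l with hw
  have hRHS : (V * (Matrix.posSemidef_conjTranspose_mul_self X).sqrt).trace
      = ∑ l, |e l| * w l := by
    rw [← hsqrtX]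
    simp only [Matrix.trace, Matrix.diag, Matrix.mul_apply, Matrix.mul_diagonal,
      Matrix.conjTranspose_apply, star_trivial, Finset.sum_mul, Finset.mul_sum, hw]
    rw [sum_rotate]
    refine Finset.sum_congr rfl fun l _ => ?_
    refine Finset.sum_congr rfl fun i _ => ?_
    refine Finset.sum_congr rfl fun j _ => ?_
    simp only [Matrix.diagonal_apply, mul_ite, ite_mul, mul_zero, zero_mul,
      Finset.sum_ite_eq, Finset.sum_ite_eq', Finset.mem_univ, if_true]
    ring
  -- the quadratures in the eigenbasis
  set c : Fin (2*n) → Fin (2*n) → ℂ := fun i l => ((Ur i l : ℝ) : ℂ) with hc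
  set S : Fin (2*n) → Matrix (Fin m) (Fin m) ℂ := fun l => ∑ i, c i l • R i with hS
  set T : Fin (2*n) → Matrix (Fin m) (Fin m) ℂ := fun l => S l * ρ * S l with hT
  have hTpsd : ∀ l, (T l).PosSemidef := by
    intro l
    have hSh : (S l)ᴴ = S l := by
      simp [hS, Matrix.conjTranspose_sum, Matrix.conjTranspose_smul, (hR _).eq, hc,
        Complex.star_def, Complex.conj_ofReal]
    have h2 := hρ.conjTranspose_mul_mul_same (S l)
    rw [hSh] at h2
    exact h2
  have smul_psd : ∀ (r : ℝ), 0 ≤ r → ∀ {A : Matrix (Fin m) (Fin m) ℂ}, A.PosSemidef →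
      ((r:ℂ) • A).PosSemidef := by
    intro r hr A hA
    constructor
    · rw [Matrix.IsHermitian, Matrix.conjTranspose_smul, hA.1.eq]
      congr 1
      simp [Complex.star_def, Complex.conj_ofReal]
    · exact (hA.smul (Complex.zero_le_real.mpr hr)).2
  have psd_sum : ∀ (g : Fin (2*n) → ℝ), (∀ l, 0 ≤ g l) →
      (∑ l, ((g l : ℝ):ℂ) • T l).PosSemidef := by
    intro g hg
    refine Finset.sum_induction _ _ (fun a b ha hb => ha.add hb) Matrix.PosSemidef.zero ?_
    intro l _
    exact smul_psd _ (hg l) (hTpsd l)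
  have hTexp : ∀ l, T l = ∑ i, ∑ j, (c i l * c j l) • (R i * ρ * R j) := by
    intro l
    simp only [hT, hS, Finset.sum_mul, Finset.mul_sum, smul_mul_assoc, mul_smul_comm,
      smul_smul, Finset.smul_sum]
    rw [Finset.sum_comm]
    refine Finset.sum_congr rfl fun i _ => ?_
    refine Finset.sum_congr rfl fun j _ => ?_
    rw [mul_comm]
  have hexpand : ∀ f : Fin (2*n) → ℝ,
      ∑ l, ((f l : ℝ):ℂ) • T l
        = ∑ i, ∑ j, ((∑ l, Ur i l * f l * Ur j l : ℝ):ℂ) • (R i * ρ * R j) := by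
    intro f
    simp only [hTexp, Finset.smul_sum, smul_smul, Complex.ofReal_sum, Finset.sum_smul]
    conv_rhs => rw [sum_rotate]
    refine Finset.sum_congr rfl fun l _ => ?_
    refine Finset.sum_congr rfl fun i _ => ?_
    refine Finset.sum_congr rfl fun j _ => ?_
    congr 1
    simp only [hc]
    push_cast
    ring
  set P : Matrix (Fin m) (Fin m) ℂ := ∑ l, ((max (e l) 0 : ℝ):ℂ) • T l with hP
  set Nm : Matrix (Fin m) (Fin m) ℂ := ∑ l, ((max (-e l) 0 : ℝ):ℂ) • T l with hN
  have hPpsd : P.PosSemidef := psd_sum _ fun l => le_max_right _ _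
  have hNpsd : Nm.PosSemidef := psd_sum _ fun l => le_max_right _ _
  have hXentry : ∀ i j, X i j = ∑ l, Ur i l * e l * Ur j l := by
    intro i j
    conv_lhs => rw [hspec]
    simp only [Matrix.mul_apply, Matrix.diagonal_apply, ite_mul, mul_ite, mul_zero, zero_mul,
      Finset.sum_ite_eq, Finset.sum_ite_eq', Finset.mem_univ, if_true,
      Matrix.conjTranspose_apply, star_trivial]
  have hM : (∑ i, ∑ j, (X i j : ℂ) • (R i * ρ * R j)) = P - Nm := by
    have h1 : ∑ l, ((e l : ℝ):ℂ) • T l = P - Nm := by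
      rw [hP, hN, ← Finset.sum_sub_distrib]
      refine Finset.sum_congr rfl fun l _ => ?_
      rw [← sub_smul]
      congr 1
      rw [← Complex.ofReal_sub, max_zero_sub_max_neg_zero_eq_self]
    rw [← h1, hexpand e]
    refine Finset.sum_congr rfl fun i _ => Finset.sum_congr rfl fun j _ => ?_
    rw [hXentry i j]
  have hbound := traceNorm_sub_psd_le hPpsd hNpsd
  rw [← hM] at hbound
  have htl : ∀ l, (T l).trace = (((1/2 : ℝ) * w l : ℝ) : ℂ) := by
    intro l
    have h1 : (T l).trace = ∑ i, ∑ j, (c i l * c j l) * (ρ * (R j * R i)).trace := by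
      rw [hTexp l, Matrix.trace_sum]
      refine Finset.sum_congr rfl fun i _ => ?_
      rw [Matrix.trace_sum]
      refine Finset.sum_congr rfl fun j _ => ?_
      rw [Matrix.trace_smul, smul_eq_mul]
      congr 1
      rw [Matrix.trace_mul_cycle, Matrix.trace_mul_comm]
    have h2 : (T l).trace = ∑ i, ∑ j, (c i l * c j l) * (ρ * (R i * R j)).trace := by
      rw [h1, Finset.sum_comm]
      refine Finset.sum_congr rfl fun i _ => Finset.sum_congr rfl fun j _ => ?_
      ring
    have h3 : (2:ℂ) * (T l).trace = ∑ i, ∑ j, (c i l * c j l) * ((V i j : ℝ):ℂ) := by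
      have h4 : (2:ℂ) * (T l).trace
          = (∑ i, ∑ j, (c i l * c j l) * (ρ * (R i * R j)).trace)
            + ∑ i, ∑ j, (c i l * c j l) * (ρ * (R j * R i)).trace := by
        rw [← h1, ← h2]
        ring
      rw [h4, ← Finset.sum_add_distrib]
      refine Finset.sum_congr rfl fun i _ => ?_
      rw [← Finset.sum_add_distrib]
      refine Finset.sum_congr rfl fun j _ => ?_
      rw [← mul_add]
      congr 1
      have h5 := hV i j
      rw [mul_add, Matrix.trace_add] at h5
      exact h5
    have h6 : ∑ i, ∑ j, (c i l * c j l) * ((V i j : ℝ):ℂ) = ((w l : ℝ):ℂ) := by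
      rw [hw]
      dsimp only
      push_cast
      refine Finset.sum_congr rfl fun i _ => Finset.sum_congr rfl fun j _ => ?_
      simp only [hc]
      ring
    have h7 : (T l).trace = (1/2 : ℂ) * ((w l : ℝ):ℂ) := by
      rw [← h6, ← h3]
      ring
    rw [h7]
    push_cast
    ring
  have hPt : P.trace = ((∑ l, max (e l) 0 * ((1/2) * w l) : ℝ) : ℂ) := by
    rw [hP, Matrix.trace_sum, Complex.ofReal_sum]
    refine Finset.sum_congr rfl fun l _ => ?_
    rw [Matrix.trace_smul, htl l, smul_eq_mul]
    push_cast
    ring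
  have hNt : Nm.trace = ((∑ l, max (-e l) 0 * ((1/2) * w l) : ℝ) : ℂ) := by
    rw [hN, Matrix.trace_sum, Complex.ofReal_sum]
    refine Finset.sum_congr rfl fun l _ => ?_
    rw [Matrix.trace_smul, htl l, smul_eq_mul]
    push_cast
    ring
  refine le_trans hbound ?_
  rw [hPt, hNt, Complex.ofReal_re, Complex.ofReal_re, hRHS, ← Finset.sum_add_distrib,
    Finset.mul_sum]
  refine le_of_eq (Finset.sum_congr rfl fun l _ => ?_)
  rw [← add_mul, max_zero_add_max_neg_zero_eq_abs_self]
  ring
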